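/- A decision-making mechanism with perfect information is gap-free if and only if it is an elected dictatorship: at every leaf node some agent is (counterfactually) responsible if and only if every root-to-leaf decision path contains a node at which some agent is a dictator. -/

import Mathlib

inductive Outcome where
  | yes : Outcome
  | no : Outcome
deriving DecidableEq

def Outcome.flip : Outcome → Outcome
  | .yes => .no
  | .no => .yes

/-- A decision-making mechanism (perfect information):
a finite rooted directed tree `(V, E)` with root `root`,
agents `A`, actions `Act`, available-action sets `Δ`,
choice functions `τ`, and a leaf labelling `lab`. -/
structure Mech (V A Act : Type) where
  finV : Fintype V
  E : V → V → Prop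
  root : V
  root_no_parent : ∀ v, ¬ E v root
  unique_parent : ∀ u v w, E u w → E v w → u = v
  reach : ∀ v, Relation.ReflTransGen E root v
  Δ : A → V → Set Act
  Δ_nonempty : ∀ a v, (∃ u, E v u) → (Δ a v).Nonempty
  τ : V → (A → Act) → V
  τ_child : ∀ v δ, (∃ u, E v u) → (∀ b, δ b ∈ Δ b v) → E v (τ v δ)
  lab : V → Outcome

namespace Mech

variable {V A Act : Type}

def IsLeaf (M : Mech V A Act) (v : V) : Prop := ∀ u, ¬ M.E v u

def IsDecision (M : Mech V A Act) (v : V) : Prop := ∃ u, M.E v u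

/-- `Next a d v` : the set of children the process can move to from `v`
when agent `a` chooses action `d`. -/
def Next (M : Mech V A Act) (a : A) (d : Act) (v : V) : Set V :=
  { u | ∃ δ : A → Act, (∀ b, δ b ∈ M.Δ b v) ∧ δ a = d ∧ u = M.τ v δ }

/-- `win_a(o)`: the smallest set containing all leaves labelled `o` and
closed under: if `Next a d v ⊆ win_a(o)` for some available action `d`
at a decision node `v`, then `v ∈ win_a(o)`. -/
inductive Win (M : Mech V A Act) (a : A) (o : Outcome) : V → Prop where
  | leaf (v : V) : M.IsLeaf v → M.lab v = o → Win M a o v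
  | step (v : V) (d : Act) : M.IsDecision v → d ∈ M.Δ a v →
      (∀ u ∈ M.Next a d v, Win M a o u) → Win M a o v

/-- A decision path starting at the root. -/
def RootPath (M : Mech V A Act) (l : List V) : Prop :=
  l.head? = some M.root ∧ l.Chain' M.E

/-- Agent `a` is (counterfactually) responsible at leaf `v`. -/
def Responsible (M : Mech V A Act) (a : A) (v : V) : Prop :=
  ∃ l : List V, M.RootPath l ∧ l.getLast? = some v ∧
    ∃ u ∈ l, M.IsDecision u ∧ M.Win a (M.lab v).flip u

def GapFree (M : Mech V A Act) : Prop :=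
  ∀ v, M.IsLeaf v → ∃ a, M.Responsible a v

def Dictator (M : Mech V A Act) (a : A) (v : V) : Prop :=
  M.Win a Outcome.yes v ∧ M.Win a Outcome.no v

def ElectedDictatorship (M : Mech V A Act) : Prop :=
  ∀ (l : List V) (v : V), M.RootPath l → l.getLast? = some v → M.IsLeaf v →
    ∃ u ∈ l, ∃ a, M.Dictator a u

end Mech

/-- A decision-making mechanism with imperfect information. -/
structure IMech (V A Act : Type) extends Mech V A Act where
  sim : A → V → V → Prop
  sim_equiv : ∀ a, Equivalence (sim a)
  sim_decision : ∀ a u v, sim a u v → ((∃ w, E u w) ↔ (∃ w, E v w))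
  sim_Δ : ∀ a u v, sim a u v → Δ a u = Δ a v

namespace IMech

variable {V A Act : Type}

/-- `Next a d ([v]_a)` : the union of `Next a d u` over all `u ∼_a v`. -/
def NextCl (M : IMech V A Act) (a : A) (d : Act) (v : V) : Set V :=
  { w | ∃ u, M.sim a v u ∧ w ∈ M.toMech.Next a d u }

/-- `ewin_a(o)`. -/
inductive EWin (M : IMech V A Act) (a : A) (o : Outcome) : V → Prop where
  | leaf (v : V) : M.toMech.IsLeaf v → M.lab v = o → EWin M a o v
  | known (v : V) (d : Act) : M.toMech.IsDecision v → d ∈ M.Δ a v →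
      (∀ w ∈ M.NextCl a d v, EWin M a o w) → EWin M a o v
  | blind (v : V) : M.toMech.IsDecision v →
      (∀ d ∈ M.Δ a v, ∀ w ∈ M.toMech.Next a d v, EWin M a o w) → EWin M a o v

/-- `uwin_a(o)`. -/
inductive UWin (M : IMech V A Act) (a : A) (o : Outcome) : V → Prop where
  | leaf (v : V) : M.toMech.IsLeaf v → M.lab v = o → UWin M a o v
  | known (v : V) (d : Act) : M.toMech.IsDecision v → d ∈ M.Δ a v →
      (∀ w ∈ M.NextCl a d v, UWin M a o w) → UWin M a o v

def EpistemicallyResponsible (M : IMech V A Act) (a : A) (v : V) : Prop :=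
  ∃ l : List V, M.toMech.RootPath l ∧ l.getLast? = some v ∧
    ∃ u ∈ l, M.toMech.IsDecision u ∧ M.EWin a (M.lab v).flip u

def EpistemicGapFree (M : IMech V A Act) : Prop :=
  ∀ v, M.toMech.IsLeaf v → ∃ a, M.EpistemicallyResponsible a v

def EpistemicDictator (M : IMech V A Act) (a : A) (v : V) : Prop :=
  M.EWin a Outcome.yes v ∧ M.EWin a Outcome.no v

def ElectedEpistemicDictatorship (M : IMech V A Act) : Prop :=
  ∀ (l : List V) (v : V), M.toMech.RootPath l → l.getLast? = some v →
    M.toMech.IsLeaf v → ∃ u ∈ l, ∃ a, M.EpistemicDictator a u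

def SemiEpistemicDictator (M : IMech V A Act) (a : A) (v : V) : Prop :=
  ∃ o : Outcome, M.EWin a o v ∧ M.toMech.Win a o.flip v

def ElectedSemiEpistemicDictatorship (M : IMech V A Act) : Prop :=
  ∀ (l : List V) (v : V), M.toMech.RootPath l → l.getLast? = some v →
    M.toMech.IsLeaf v → ∃ u ∈ l, ∃ a, M.SemiEpistemicDictator a u

end IMech


/-! If some node `u` on the path to a leaf has a dictator, that dictator is responsible there.
Conversely, suppose a path from the root to a leaf has no dictator and let `x` be its first
node at which some agent `b` wins some outcome `o`. Two different agents can never win opposite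
outcomes at the same node, since their strategies can be played simultaneously; hence nobody
wins `ō` at `x`, and whenever `b` plays a winning strategy for `o` some outcome of it keeps
nobody winning `ō`. Following such outcomes from `x` reaches a leaf labelled `o` at which,
since root paths in a tree are unique, nobody is responsible. -/

theorem Outcome.flip_ne (o : Outcome) : o.flip ≠ o := by
  cases o <;> decide

theorem List.exists_append_cons_of_exists {α : Type*} {p : α → Prop} {l : List α}
    (h : ∃ x ∈ l, p x) : ∃ l₁ x l₂, l = l₁ ++ x :: l₂ ∧ p x ∧ ∀ y ∈ l₁, ¬ p y := by
  classical
  obtain ⟨x, hx⟩ := Option.isSome_iff_exists.1 <|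
    (List.find?_isSome (p := fun x => decide (p x))).2 (by simpa using h)
  obtain ⟨hpx, l₁, l₂, rfl, hl₁⟩ := List.find?_eq_some_iff_append.1 hx
  exact ⟨l₁, x, l₂, rfl, by simpa using hpx, by simpa using hl₁⟩

theorem List.IsChain.eq_of_head?_eq_of_getLast?_eq {α : Type*} {R : α → α → Prop} {r : α}
    (hR : ∀ x y z, R x y → R x z → y = z) (hr : ∀ y, ¬ R r y) {l l' : List α}
    (hl : l.IsChain R) (hl' : l'.IsChain R) (hhead : l.head? = l'.head?)
    (hlast : l.getLast? = some r) (hlast' : l'.getLast? = some r) : l = l' := by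
  induction l generalizing l' with
  | nil => simp at hlast
  | cons x t ih =>
    obtain _ | ⟨x', t'⟩ := l'
    · simp at hhead
    obtain rfl : x = x' := by simpa using hhead
    obtain _ | ⟨y, s⟩ := t <;> obtain _ | ⟨y', s'⟩ := t'
    · rfl
    · obtain rfl : x = r := by simpa using hlast
      exact absurd (List.isChain_cons_cons.1 hl').1 (hr y')
    · obtain rfl : x = r := by simpa using hlast'
      exact absurd (List.isChain_cons_cons.1 hl).1 (hr y)
    · rw [List.isChain_cons_cons] at hl hl'
      obtain rfl := hR x y y' hl.1 hl'.1
      rw [ih hl.2 hl'.2 rfl (by simpa using hlast) (by simpa using hlast')]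

namespace Mech

variable {V A Act : Type} {M : Mech V A Act}

theorem RootPath.eq_of_getLast?_eq {l l' : List V} (hl : M.RootPath l) (hl' : M.RootPath l')
    (h : l.getLast? = l'.getLast?) : l = l' := by
  rw [← List.reverse_inj]
  refine List.IsChain.eq_of_head?_eq_of_getLast?_eq (R := fun x y => M.E y x) (r := M.root)
    (fun x y z hy hz => M.unique_parent y z x hy hz) M.root_no_parent
    (List.isChain_reverse.2 hl.2) (List.isChain_reverse.2 hl'.2) ?_ ?_ ?_ <;>
    simp [h, hl.1, hl'.1]

theorem RootPath.concat {p : List V} {x u : V} (hp : M.RootPath p) (hx : p.getLast? = some x)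
    (he : M.E x u) : M.RootPath (p ++ [u]) := by
  have hne : p ≠ [] := by rintro rfl; simp at hx
  refine ⟨by rw [List.head?_append_of_ne_nil _ hne]; exact hp.1,
    hp.2.append (List.isChain_singleton u) ?_⟩
  simpa [hx] using he

theorem RootPath.of_append {l₁ l₂ : List V} (h : M.RootPath (l₁ ++ l₂)) (hne : l₁ ≠ []) :
    M.RootPath l₁ :=
  ⟨by rw [← List.head?_append_of_ne_nil _ hne]; exact h.1, h.2.left_of_append⟩

variable (M) in
theorem exists_rootPath (v : V) : ∃ l, M.RootPath l ∧ l.getLast? = some v := by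
  induction M.reach v with
  | refl => exact ⟨[M.root], ⟨rfl, List.isChain_singleton _⟩, rfl⟩
  | tail _ he ih =>
    obtain ⟨l, hl, hlast⟩ := ih
    exact ⟨_, RootPath.concat hl hlast he, List.getLast?_concat⟩

theorem rel_of_mem_next {a : A} {d : Act} {v u : V} (hv : M.IsDecision v)
    (hu : u ∈ M.Next a d v) : M.E v u := by
  obtain ⟨δ, hδ, -, rfl⟩ := hu
  exact M.τ_child v δ hv hδ

theorem next_inter_next_nonempty {a b : A} {d e : Act} {v : V} (hab : a ≠ b)
    (hv : M.IsDecision v) (hd : d ∈ M.Δ a v) (he : e ∈ M.Δ b v) :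
    (M.Next a d v ∩ M.Next b e v).Nonempty := by
  classical
  let δ := Function.update (Function.update (fun c => (M.Δ_nonempty c v hv).some) b e) a d
  have hδ : ∀ c, δ c ∈ M.Δ c v := by
    intro c
    simp only [δ, Function.update_apply]
    split_ifs with hca hcb
    · exact hca ▸ hd
    · exact hcb ▸ he
    · exact (M.Δ_nonempty c v hv).some_mem
  exact ⟨M.τ v δ, ⟨δ, hδ, by simp [δ], rfl⟩, ⟨δ, hδ, by simp [δ, hab.symm], rfl⟩⟩

theorem Win.eq_of_win_flip {a b : A} {o : Outcome} {v : V} (ha : M.Win a o v)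
    (hb : M.Win b o.flip v) : a = b := by
  induction ha with
  | leaf v hv hlab =>
    cases hb with
    | leaf _ _ hlab' => exact absurd (hlab ▸ hlab').symm (Outcome.flip_ne o)
    | step _ _ hdec _ _ => exact absurd hdec.choose_spec (hv _)
  | step v d hdec hd _ ih =>
    cases hb with
    | leaf _ hv _ => exact absurd hdec.choose_spec (hv _)
    | step _ e _ he hnext =>
      by_contra hab
      obtain ⟨u, hua, hub⟩ := next_inter_next_nonempty hab hdec hd he
      exact hab (ih u hua (hnext u hub))

theorem Win.dictator {a : A} {o : Outcome} {v : V} (h : M.Win a o v) (h' : M.Win a o.flip v) :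
    M.Dictator a v := by
  cases o
  exacts [⟨h, h'⟩, ⟨h', h⟩]

theorem Dictator.win {a : A} {v : V} (h : M.Dictator a v) : ∀ o, M.Win a o v
  | .yes => h.1
  | .no => h.2

theorem Dictator.isDecision {a : A} {v : V} (h : M.Dictator a v) : M.IsDecision v := by
  cases h.1 with
  | step _ _ hv _ _ => exact hv
  | leaf _ _ hyes =>
    cases h.2 with
    | step _ _ hv _ _ => exact hv
    | leaf _ _ hno => exact absurd (hyes.symm.trans hno) (by decide)

theorem Win.exists_leaf_forall_not_responsible {b : A} {o : Outcome} {x : V} {p : List V}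
    (hw : M.Win b o x) (hp : M.RootPath p) (hx : p.getLast? = some x)
    (hfree : ∀ u ∈ p, ∀ c, ¬ M.Win c o.flip u) :
    ∃ z, M.IsLeaf z ∧ ∀ a, ¬ M.Responsible a z := by
  induction hw generalizing p with
  | leaf x hleaf hlab =>
    refine ⟨x, hleaf, fun a ⟨l, hl, hlast, u, hu, _, hwin⟩ => ?_⟩
    rw [RootPath.eq_of_getLast?_eq hl hp (hlast.trans hx.symm)] at hu
    exact hfree u hu a (hlab ▸ hwin)
  | step x d hdec hd hnext ih =>
    obtain ⟨u, hu, hbu⟩ : ∃ u ∈ M.Next b d x, ¬ M.Win b o.flip u := by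
      by_contra! h
      exact hfree x (List.mem_of_getLast? hx) b (.step x d hdec hd h)
    refine ih u hu (RootPath.concat hp hx (rel_of_mem_next hdec hu)) List.getLast?_concat ?_
    intro w hw c hc
    obtain hw | hw := List.mem_append.1 hw
    · exact hfree w hw c hc
    · obtain rfl := List.mem_singleton.1 hw
      exact hbu ((hnext w hu).eq_of_win_flip hc ▸ hc)

theorem GapFree.electedDictatorship (h : M.GapFree) : M.ElectedDictatorship := by
  intro l v hl hv hleaf
  by_contra! hnd
  obtain ⟨a₀, -⟩ := h v hleaf
  obtain ⟨l₁, x, l₂, rfl, ⟨c, o, hcx⟩, hl₁⟩ := List.exists_append_cons_of_exists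
    (p := fun u => ∃ c o, M.Win c o u) ⟨v, List.mem_of_getLast? hv, a₀, _, .leaf v hleaf rfl⟩
  have hfree : ∀ u ∈ l₁ ++ [x], ∀ c', ¬ M.Win c' o.flip u := by
    intro u hu c' hc'
    obtain hu | hu := List.mem_append.1 hu
    · exact hl₁ u hu ⟨c', _, hc'⟩
    · obtain rfl := List.mem_singleton.1 hu
      exact hnd u (by simp) c (hcx.dictator (hcx.eq_of_win_flip hc' ▸ hc'))
  have hpre : M.RootPath (l₁ ++ [x]) :=
    RootPath.of_append (l₂ := l₂) (by simpa using hl) (by simp)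
  obtain ⟨z, hz, hnot⟩ := hcx.exists_leaf_forall_not_responsible hpre List.getLast?_concat hfree
  obtain ⟨a, ha⟩ := h z hz
  exact hnot a ha

theorem ElectedDictatorship.gapFree (h : M.ElectedDictatorship) : M.GapFree := by
  intro v hleaf
  obtain ⟨l, hl, hlast⟩ := M.exists_rootPath v
  obtain ⟨u, hu, a, hdict⟩ := h l v hl hlast hleaf
  exact ⟨a, l, hl, hlast, u, hu, hdict.isDecision, hdict.win _⟩

end Mech

theorem stmt10 {V A Act : Type} (M : Mech V A Act) :
    M.GapFree ↔ M.ElectedDictatorship :=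
  ⟨Mech.GapFree.electedDictatorship, Mech.ElectedDictatorship.gapFree⟩
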